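/- arXiv:1602.04521 — 2 statements merged into one kernel-verified Lean document; each statement's English description precedes it below -/
import Mathlib

section
/- Let q be a prime, let G be a uniformly random k×n matrix over F_q, and let b_1, b_2 be uniformly distributed on F_q^n, with G, b_1, b_2 mutually independent. Define g(u) = uG + b_1 and g'(u') = u'G + b_2 for u, u' ∈ F_q^k. If u, ũ, u', ũ' ∈ F_q^k are such that the vectors u − ũ and u' − ũ' are linearly independent over F_q, then the four-tuple (g(u), g(ũ), g'(u'), g'(ũ')) is uniformly distributed on (F_q^n)^4; in particular, the indicator events {g(u) = v_1, g'(u') = v_2} and {g(ũ) = ṽ_1, g'(ũ') = ṽ_2} are independent for all v_1, v_2, ṽ_1, ṽ_2 ∈ F_q^n. -/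
open Matrix PMF


section aux
variable {α β : Type*} [Fintype α] [Fintype β] [DecidableEq β]
  [AddCommGroup α] [AddCommGroup β]

private lemma fiber_card_const' (f : α →+ β) (hf : Function.Surjective f) (b : β) :
    Fintype.card {a // b = f a} = Fintype.card {a // (0 : β) = f a} := by
  obtain ⟨a0, ha0⟩ := hf b
  apply Fintype.card_congr
  refine ⟨fun x => ⟨x.1 - a0, by simp [map_sub, ← x.2, ha0]⟩,
          fun x => ⟨x.1 + a0, by simp [map_add, ← x.2, ha0]⟩, ?_, ?_⟩ <;>
    rintro ⟨x, hx⟩ <;> simp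

private lemma uniform_map_addHom [Nonempty α] (f : α →+ β) (hf : Function.Surjective f) :
    (PMF.uniformOfFintype α).map f = PMF.uniformOfFintype β := by
  haveI : Nonempty β := Nonempty.map f ‹_›
  set m : ℕ := Fintype.card {a // (0 : β) = f a} with hm
  haveI : Nonempty {a // (0 : β) = f a} := ⟨⟨0, by simp⟩⟩
  have hcard : ∀ b : β, (Finset.univ.filter fun a => b = f a).card = m := by
    intro b
    rw [← Fintype.card_subtype, fiber_card_const' f hf b]
  have hsum : Fintype.card α = m * Fintype.card β := by
    have h1 : (Finset.univ : Finset α).card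
        = ∑ b : β, (Finset.univ.filter fun a => f a = b).card :=
      Finset.card_eq_sum_card_fiberwise (fun x _ => Finset.mem_univ _)
    have h2 : ∀ b : β, (Finset.univ.filter fun a => f a = b).card
        = (Finset.univ.filter fun a => b = f a).card := by
      intro b; congr 1; ext a; simp [eq_comm]
    rw [Finset.card_univ] at h1
    rw [h1]
    simp [h2, hcard, Finset.sum_const, mul_comm]
  ext b
  rw [PMF.map_apply, tsum_fintype]
  simp only [PMF.uniformOfFintype_apply]
  have hst : ∑ a : α, (if b = f a then ((Fintype.card α : ENNReal))⁻¹ else 0)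
      = (Finset.univ.filter fun a => b = f a).card * ((Fintype.card α : ENNReal))⁻¹ := by
    rw [← Finset.sum_filter, Finset.sum_const, nsmul_eq_mul]
  rw [hst, hcard b]
  have hm0 : (m : ENNReal) ≠ 0 := by
    simpa [hm] using Fintype.card_ne_zero (α := {a // (0 : β) = f a})
  rw [hsum]
  push_cast
  rw [ENNReal.mul_inv (Or.inl hm0) (Or.inl (by simp)), ← mul_assoc,
    ENNReal.mul_inv_cancel hm0 (by simp), one_mul]

end aux


/-- Let `q` be a prime, `G` a uniformly random `k × n` matrix over
`F_q`, and `b_1, b_2` uniform on `F_q^n`, with `G, b_1, b_2` mutually independent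
(modelled by a uniform sample `ω = (G, b_1, b_2)`).  Define `g(u) = uG + b_1` and
`g'(u') = u'G + b_2`.  If `u, ũ, u', ũ' ∈ F_q^k` are such that `u - ũ` and `u' - ũ'`
are linearly independent over `F_q`, then `(g(u), g(ũ), g'(u'), g'(ũ'))` is uniformly
distributed on `(F_q^n)^4`; in particular, the events `{g(u) = v₁, g'(u') = v₂}` and
`{g(ũ) = ṽ₁, g'(ũ') = ṽ₂}` are independent for all `v₁, v₂, ṽ₁, ṽ₂ ∈ F_q^n`. -/
theorem nqlc_fourtuple_uniform_and_indep (q : ℕ) [Fact (Nat.Prime q)] (k n : ℕ)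
    (u utld u' utld' : Fin k → ZMod q)
    (hind : LinearIndependent (ZMod q) ![u - utld, u' - utld']) :
    (PMF.uniformOfFintype
        (Matrix (Fin k) (Fin n) (ZMod q) × (Fin n → ZMod q) × (Fin n → ZMod q))).map
        (fun ω => (u ᵥ* ω.1 + ω.2.1, utld ᵥ* ω.1 + ω.2.1,
                   u' ᵥ* ω.1 + ω.2.2, utld' ᵥ* ω.1 + ω.2.2)) =
      PMF.uniformOfFintype
        ((Fin n → ZMod q) × (Fin n → ZMod q) × (Fin n → ZMod q) × (Fin n → ZMod q)) ∧
    ∀ v₁ v₂ w₁ w₂ : Fin n → ZMod q,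
      (PMF.uniformOfFintype
          (Matrix (Fin k) (Fin n) (ZMod q) ×
            (Fin n → ZMod q) × (Fin n → ZMod q))).toOuterMeasure
          ({ω | u ᵥ* ω.1 + ω.2.1 = v₁ ∧ u' ᵥ* ω.1 + ω.2.2 = v₂} ∩
           {ω | utld ᵥ* ω.1 + ω.2.1 = w₁ ∧ utld' ᵥ* ω.1 + ω.2.2 = w₂}) =
        (PMF.uniformOfFintype
            (Matrix (Fin k) (Fin n) (ZMod q) ×
              (Fin n → ZMod q) × (Fin n → ZMod q))).toOuterMeasure
            {ω | u ᵥ* ω.1 + ω.2.1 = v₁ ∧ u' ᵥ* ω.1 + ω.2.2 = v₂} *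
          (PMF.uniformOfFintype
              (Matrix (Fin k) (Fin n) (ZMod q) ×
                (Fin n → ZMod q) × (Fin n → ZMod q))).toOuterMeasure
              {ω | utld ᵥ* ω.1 + ω.2.1 = w₁ ∧ utld' ᵥ* ω.1 + ω.2.2 = w₂} := by
  classical
  let F4 : (Matrix (Fin k) (Fin n) (ZMod q) × (Fin n → ZMod q) × (Fin n → ZMod q)) →+
      ((Fin n → ZMod q) × (Fin n → ZMod q) × (Fin n → ZMod q) × (Fin n → ZMod q)) :=
    AddMonoidHom.mk' (fun ω => (u ᵥ* ω.1 + ω.2.1, utld ᵥ* ω.1 + ω.2.1,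
                   u' ᵥ* ω.1 + ω.2.2, utld' ᵥ* ω.1 + ω.2.2))
      (by
        rintro ⟨A, b1, b2⟩ ⟨A', b1', b2'⟩
        simp only [Prod.mk_add_mk, Prod.mk.injEq, Matrix.vecMul_add]
        refine ⟨?_, ?_, ?_, ?_⟩ <;> abel)
  let P1 : (Matrix (Fin k) (Fin n) (ZMod q) × (Fin n → ZMod q) × (Fin n → ZMod q)) →+
      ((Fin n → ZMod q) × (Fin n → ZMod q)) :=
    AddMonoidHom.mk' (fun ω => (u ᵥ* ω.1 + ω.2.1, u' ᵥ* ω.1 + ω.2.2))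
      (by rintro ⟨A, b1, b2⟩ ⟨A', b1', b2'⟩
          simp only [Prod.mk_add_mk, Prod.mk.injEq, Matrix.vecMul_add]
          refine ⟨?_, ?_⟩ <;> abel)
  let P2 : (Matrix (Fin k) (Fin n) (ZMod q) × (Fin n → ZMod q) × (Fin n → ZMod q)) →+
      ((Fin n → ZMod q) × (Fin n → ZMod q)) :=
    AddMonoidHom.mk' (fun ω => (utld ᵥ* ω.1 + ω.2.1, utld' ᵥ* ω.1 + ω.2.2))
      (by rintro ⟨A, b1, b2⟩ ⟨A', b1', b2'⟩
          simp only [Prod.mk_add_mk, Prod.mk.injEq, Matrix.vecMul_add]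
          refine ⟨?_, ?_⟩ <;> abel)
  have hP1 : Function.Surjective P1 := by
    rintro ⟨y1, y2⟩
    exact ⟨(0, y1, y2), by simp [P1, Matrix.vecMul_zero]⟩
  have hP2 : Function.Surjective P2 := by
    rintro ⟨y1, y2⟩
    exact ⟨(0, y1, y2), by simp [P2, Matrix.vecMul_zero]⟩
  have hF4 : Function.Surjective F4 := by
    rintro ⟨y1, y2, y3, y4⟩
    have hne : u - utld ≠ u' - utld' := by
      intro h
      have h01 : (0 : Fin 2) = 1 := hind.injective (by
        show ![u - utld, u' - utld'] 0 = ![u - utld, u' - utld'] 1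
        simpa using h)
      simp at h01
    have hind' : LinearIndepOn (ZMod q) id (Set.range ![u - utld, u' - utld']) :=
      hind.linearIndepOn_id
    let B := Module.Basis.extend hind'
    have hw1mem : u - utld ∈ hind'.extend (Set.subset_univ _) :=
      hind'.subset_extend _ ⟨0, rfl⟩
    have hw2mem : u' - utld' ∈ hind'.extend (Set.subset_univ _) :=
      hind'.subset_extend _ ⟨1, rfl⟩
    let g : (hind'.extend (Set.subset_univ _) : Set (Fin k → ZMod q)) → (Fin n → ZMod q) :=
      fun x => if (x : Fin k → ZMod q) = u - utld then y1 - y2 else y3 - y4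
    let T : (Fin k → ZMod q) →ₗ[ZMod q] (Fin n → ZMod q) := B.constr (ZMod q) g
    have hTw1 : T (u - utld) = y1 - y2 := by
      have e1 : u - utld = B ⟨u - utld, hw1mem⟩ := (Module.Basis.extend_apply_self hind' ⟨_, hw1mem⟩).symm
      rw [e1]
      show (B.constr (ZMod q) g) (B ⟨u - utld, hw1mem⟩) = y1 - y2
      rw [Module.Basis.constr_basis]
      simp [g]
    have hTw2 : T (u' - utld') = y3 - y4 := by
      have e2 : u' - utld' = B ⟨u' - utld', hw2mem⟩ := (Module.Basis.extend_apply_self hind' ⟨_, hw2mem⟩).symm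
      rw [e2]
      show (B.constr (ZMod q) g) (B ⟨u' - utld', hw2mem⟩) = y3 - y4
      rw [Module.Basis.constr_basis]
      simp [g, hne.symm]
    let G : Matrix (Fin k) (Fin n) (ZMod q) := (LinearMap.toMatrix' T)ᵀ
    have hGv : ∀ v : Fin k → ZMod q, v ᵥ* G = T v := by
      intro v
      rw [show G = (LinearMap.toMatrix' T)ᵀ from rfl, Matrix.vecMul_transpose,
        ← Matrix.toLin'_apply, Matrix.toLin'_toMatrix']
    refine ⟨(G, y1 - u ᵥ* G, y3 - u' ᵥ* G), ?_⟩
    have h1 : u ᵥ* G - utld ᵥ* G = y1 - y2 := by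
      rw [← Matrix.sub_vecMul, hGv]; exact hTw1
    have h2 : u' ᵥ* G - utld' ᵥ* G = y3 - y4 := by
      rw [← Matrix.sub_vecMul, hGv]; exact hTw2
    simp only [F4, AddMonoidHom.mk'_apply, Prod.mk.injEq]
    refine ⟨by abel, ?_, by abel, ?_⟩
    · have e : utld ᵥ* G + (y1 - u ᵥ* G) = y1 - (u ᵥ* G - utld ᵥ* G) := by abel
      rw [e, h1, sub_sub_cancel]
    · have e : utld' ᵥ* G + (y3 - u' ᵥ* G) = y3 - (u' ᵥ* G - utld' ᵥ* G) := by abel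
      rw [e, h2, sub_sub_cancel]
  have hU4 := uniform_map_addHom F4 hF4
  have hU1 := uniform_map_addHom P1 hP1
  have hU2 := uniform_map_addHom P2 hP2
  refine ⟨hU4, ?_⟩
  intro v₁ v₂ w₁ w₂
  have hset1 : {ω : Matrix (Fin k) (Fin n) (ZMod q) × (Fin n → ZMod q) × (Fin n → ZMod q) |
      u ᵥ* ω.1 + ω.2.1 = v₁ ∧ u' ᵥ* ω.1 + ω.2.2 = v₂} = ⇑P1 ⁻¹' {(v₁, v₂)} := by
    ext ω; simp [P1, Prod.ext_iff]
  have hset2 : {ω : Matrix (Fin k) (Fin n) (ZMod q) × (Fin n → ZMod q) × (Fin n → ZMod q) |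
      utld ᵥ* ω.1 + ω.2.1 = w₁ ∧ utld' ᵥ* ω.1 + ω.2.2 = w₂} = ⇑P2 ⁻¹' {(w₁, w₂)} := by
    ext ω; simp [P2, Prod.ext_iff]
  have hset4 : ({ω : Matrix (Fin k) (Fin n) (ZMod q) × (Fin n → ZMod q) × (Fin n → ZMod q) |
      u ᵥ* ω.1 + ω.2.1 = v₁ ∧ u' ᵥ* ω.1 + ω.2.2 = v₂} ∩
      {ω | utld ᵥ* ω.1 + ω.2.1 = w₁ ∧ utld' ᵥ* ω.1 + ω.2.2 = w₂})
      = ⇑F4 ⁻¹' {(v₁, w₁, v₂, w₂)} := by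
    ext ω
    simp only [Set.mem_inter_iff, Set.mem_setOf_eq, Set.mem_preimage, Set.mem_singleton_iff,
      F4, AddMonoidHom.mk'_apply, Prod.mk.injEq]
    tauto
  rw [hset4, hset1, hset2,
    ← PMF.toOuterMeasure_map_apply, ← PMF.toOuterMeasure_map_apply,
    ← PMF.toOuterMeasure_map_apply, hU4, hU1, hU2,
    PMF.toOuterMeasure_apply_singleton, PMF.toOuterMeasure_apply_singleton,
    PMF.toOuterMeasure_apply_singleton, PMF.uniformOfFintype_apply,
    PMF.uniformOfFintype_apply, PMF.uniformOfFintype_apply]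
  rw [← ENNReal.mul_inv
    (Or.inl (by simpa using Fintype.card_ne_zero (α := (Fin n → ZMod q) × (Fin n → ZMod q))))
    (Or.inl (ENNReal.natCast_ne_top _))]
  congr 1
  simp only [Fintype.card_prod]
  push_cast
  ring
end

section
/- Let q be a prime, let G_1,…,G_m be independent uniformly random matrices over F_q with G_i of dimensions k_i×n, and let b_1, b_2 be independent uniform dithers on F_q^n, independent of the G_i. Define g(u) = Σ_i u_i G_i + b_1 and g'(u') = Σ_i u'_i G_i + b_2. Fix finite message sets S_1, S_2 of tuples and a target set T ⊆ F_q^n × F_q^n, and let θ = Σ_{u ∈ S_1, u' ∈ S_2} 1{(g(u), g'(u')) ∈ T}. Then the covariance Cov(1{(g(u), g'(u')) ∈ T}, 1{(g(ũ), g'(ũ')) ∈ T}) equals 0 whenever the stacked vectors u − ũ and u' − ũ' in F_q^{k_1+…+k_m} are linearly independent over F_q; consequently Var(θ) = Σ Cov over only those pairs ((u,u'),(ũ,ũ')) for which u − ũ and u' − ũ' are linearly dependent. -/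
open Matrix
open scoped Classical

/-- Expectation of a real-valued function of a uniformly distributed sample from a
finite (nonempty) space. -/
noncomputable def unifExp {Ω : Type*} [Fintype Ω] (f : Ω → ℝ) : ℝ :=
  (∑ ω, f ω) / (Fintype.card Ω)

/-- Covariance of two real-valued functions of a uniformly distributed sample from a
finite space: `Cov(f, g) = E[fg] - E[f]E[g]`. -/
noncomputable def unifCov {Ω : Type*} [Fintype Ω] (f g : Ω → ℝ) : ℝ :=
  unifExp (fun ω => f ω * g ω) - unifExp f * unifExp g

/-- Variance `Var(f) = Cov(f, f)` of a real-valued function of a uniformly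
distributed sample from a finite space. -/
noncomputable def unifVar {Ω : Type*} [Fintype Ω] (f : Ω → ℝ) : ℝ :=
  unifCov f f

section AuxFiber
variable {A B : Type*} [AddCommGroup A] [AddCommGroup B] [Fintype A] [Fintype B]

private lemma fiber_card_eq (φ : A →+ B) (hsurj : Function.Surjective φ) (b : B) :
    Fintype.card {a // φ a = b} = Fintype.card {a // φ a = (0 : B)} := by
  obtain ⟨a₀, ha₀⟩ := hsurj b
  exact Fintype.card_congr
    { toFun := fun x => ⟨x.1 - a₀, by simp [map_sub, x.2, ha₀]⟩
      invFun := fun x => ⟨x.1 + a₀, by simp [map_add, x.2, ha₀]⟩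
      left_inv := fun x => by simp
      right_inv := fun x => by simp }

private lemma sum_comp_surj (φ : A →+ B) (hsurj : Function.Surjective φ) (f : B → ℝ) :
    ∑ a : A, f (φ a) = (Fintype.card {a // φ a = (0:B)} : ℝ) * ∑ b : B, f b := by
  rw [← Fintype.sum_fiberwise (fun a => φ a) (fun a => f (φ a)), Finset.mul_sum]
  refine Finset.sum_congr rfl fun b _ => ?_
  have : ∀ x : {a // φ a = b}, f (φ x.1) = f b := fun x => by rw [x.2]
  rw [Finset.sum_congr rfl fun x _ => this x, Finset.sum_const, Finset.card_univ,
    fiber_card_eq φ hsurj b]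
  simp [mul_comm]

private lemma card_eq_surj (φ : A →+ B) (hsurj : Function.Surjective φ) :
    Fintype.card A = Fintype.card B * Fintype.card {a // φ a = (0:B)} := by
  rw [← Fintype.card_congr (Equiv.sigmaFiberEquiv (fun a => φ a)), Fintype.card_sigma]
  rw [Finset.sum_congr rfl fun b _ => fiber_card_eq φ hsurj b, Finset.sum_const,
    smul_eq_mul, Finset.card_univ]

end AuxFiber

private lemma unifExp_sum {Ω ι : Type*} [Fintype Ω] (s : Finset ι) (f : ι → Ω → ℝ) :
    unifExp (fun ω => ∑ i ∈ s, f i ω) = ∑ i ∈ s, unifExp (f i) := by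
  simp only [unifExp, ← Finset.sum_div]
  rw [Finset.sum_comm]

private lemma unifCov_sum_sum {Ω ι κ : Type*} [Fintype Ω]
    (s : Finset ι) (t : Finset κ) (f : ι → Ω → ℝ) (g : κ → Ω → ℝ) :
    unifCov (fun ω => ∑ i ∈ s, f i ω) (fun ω => ∑ j ∈ t, g j ω) =
      ∑ i ∈ s, ∑ j ∈ t, unifCov (f i) (g j) := by
  have h1 : (fun ω => (∑ i ∈ s, f i ω) * ∑ j ∈ t, g j ω) =
      fun ω => ∑ i ∈ s, ∑ j ∈ t, f i ω * g j ω := by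
    funext ω; exact Finset.sum_mul_sum s t (f · ω) (g · ω)
  simp only [unifCov, h1]
  rw [unifExp_sum s (fun i ω => ∑ j ∈ t, f i ω * g j ω)]
  simp only [fun i => unifExp_sum t (fun j ω => f i ω * g j ω)]
  rw [unifExp_sum s f, unifExp_sum t g, Finset.sum_mul_sum]
  rw [← Finset.sum_sub_distrib]
  refine Finset.sum_congr rfl fun i _ => ?_
  rw [← Finset.sum_sub_distrib]

section LA
variable {q m n : ℕ} [Fact (Nat.Prime q)] {k : Fin m → ℕ}

private lemma repr_lemma (φ : ((i : Fin m) → Fin (k i) → ZMod q) →ₗ[ZMod q] ZMod q)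
    (x : (i : Fin m) → Fin (k i) → ZMod q) :
    φ x = ∑ i, ∑ r, x i r * φ (Pi.single i (Pi.single r 1)) := by
  set b : Module.Basis ((i : Fin m) × Fin (k i)) (ZMod q) ((i : Fin m) → Fin (k i) → ZMod q) :=
    Pi.basis (fun i => Pi.basisFun (ZMod q) (Fin (k i)))
  conv_lhs => rw [← b.sum_repr x]
  rw [map_sum, ← Finset.univ_sigma_univ, Finset.sum_sigma]
  refine Finset.sum_congr rfl fun i _ => Finset.sum_congr rfl fun r _ => ?_
  rw [_root_.map_smul, smul_eq_mul]
  congr 1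
  · simp [b, Pi.basis_repr]

private lemma exists_duals {v w : (i : Fin m) → Fin (k i) → ZMod q}
    (hli : LinearIndependent (ZMod q) ![v, w]) :
    ∃ φ ψ : ((i : Fin m) → Fin (k i) → ZMod q) →ₗ[ZMod q] ZMod q,
      φ v = 1 ∧ φ w = 0 ∧ ψ v = 0 ∧ ψ w = 1 := by
  let E : (Fin 2 → ZMod q) →ₗ[ZMod q] ((i : Fin m) → Fin (k i) → ZMod q) :=
    { toFun := fun a => a 0 • v + a 1 • w
      map_add' := fun a b => by simp only [Pi.add_apply, add_smul]; abel
      map_smul' := fun c a => by simp [smul_smul, smul_add] }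
  have hinj : Function.Injective E := by
    intro a b hab
    have h : ∀ j, (a - b) j = 0 := by
      refine Fintype.linearIndependent_iff.mp hli (a - b) ?_
      rw [Fin.sum_univ_two]
      simp only [Pi.sub_apply, Matrix.cons_val_zero, Matrix.cons_val_one, Matrix.head_cons,
        sub_smul]
      have h0 : a 0 • v + a 1 • w = b 0 • v + b 1 • w := hab
      calc a 0 • v - b 0 • v + (a 1 • w - b 1 • w)
          = (a 0 • v + a 1 • w) - (b 0 • v + b 1 • w) := by abel
        _ = 0 := by rw [h0, sub_self]
    funext j
    exact sub_eq_zero.mp (h j)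
  obtain ⟨g, hg⟩ := LinearMap.exists_leftInverse_of_injective E (LinearMap.ker_eq_bot.mpr hinj)
  have hgv : g v = ![1, 0] := by
    have : E ![1, 0] = v := by simp [E]
    rw [← this]
    exact congrFun (congrArg (fun f => f.toFun) hg) ![1, 0]
  have hgw : g w = ![0, 1] := by
    have : E ![0, 1] = w := by simp [E]
    rw [← this]
    exact congrFun (congrArg (fun f => f.toFun) hg) ![0, 1]
  refine ⟨(LinearMap.proj 0).comp g, (LinearMap.proj 1).comp g, ?_, ?_, ?_, ?_⟩ <;>
    simp [hgv, hgw]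

private noncomputable def psiHom (v w : (i : Fin m) → Fin (k i) → ZMod q) :
    ((i : Fin m) → Matrix (Fin (k i)) (Fin n) (ZMod q)) →+
      (Fin n → ZMod q) × (Fin n → ZMod q) where
  toFun G := (∑ i, v i ᵥ* G i, ∑ i, w i ᵥ* G i)
  map_zero' := by simp
  map_add' G H := by
    simp only [Pi.add_apply, Matrix.vecMul_add, Finset.sum_add_distrib, Prod.mk_add_mk]

private lemma psiHom_surj {v w : (i : Fin m) → Fin (k i) → ZMod q}
    (hli : LinearIndependent (ZMod q) ![v, w]) :
    Function.Surjective (psiHom (n := n) v w) := by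
  obtain ⟨φ, ψ, hφv, hφw, hψv, hψw⟩ := exists_duals hli
  rintro ⟨y₁, y₂⟩
  refine ⟨fun i => Matrix.of fun r c =>
    φ (Pi.single i (Pi.single r 1)) * y₁ c + ψ (Pi.single i (Pi.single r 1)) * y₂ c, ?_⟩
  have key : ∀ x : (i : Fin m) → Fin (k i) → ZMod q,
      (∑ i, x i ᵥ* Matrix.of fun r c =>
        φ (Pi.single i (Pi.single r 1)) * y₁ c + ψ (Pi.single i (Pi.single r 1)) * y₂ c)
      = fun c => φ x * y₁ c + ψ x * y₂ c := by
    intro x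
    funext c
    rw [Finset.sum_apply]
    have : ∀ i, (x i ᵥ* Matrix.of fun r c =>
        φ (Pi.single i (Pi.single r 1)) * y₁ c + ψ (Pi.single i (Pi.single r 1)) * y₂ c) c
        = (∑ r, x i r * φ (Pi.single i (Pi.single r 1))) * y₁ c
          + (∑ r, x i r * ψ (Pi.single i (Pi.single r 1))) * y₂ c := by
      intro i
      simp only [Matrix.vecMul, dotProduct, Matrix.of_apply, mul_add,
        Finset.sum_add_distrib, Finset.sum_mul, mul_assoc]
    rw [Finset.sum_congr rfl fun i _ => this i, Finset.sum_add_distrib,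
      ← Finset.sum_mul, ← Finset.sum_mul, ← repr_lemma φ x, ← repr_lemma ψ x]
  apply Prod.ext
  · show (∑ i, v i ᵥ* _) = y₁
    rw [key v, hφv, hψv]; funext c; simp
  · show (∑ i, w i ᵥ* _) = y₂
    rw [key w, hφw, hψw]; funext c; simp

private lemma shift_sum (T : Finset ((Fin n → ZMod q) × (Fin n → ZMod q)))
    (c₁ c₂ : Fin n → ZMod q) :
    ∑ p : (Fin n → ZMod q) × (Fin n → ZMod q),
      (if (c₁ + p.1, c₂ + p.2) ∈ T then (1:ℝ) else 0) = T.card := by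
  have := Equiv.sum_comp ((Equiv.addLeft c₁).prodCongr (Equiv.addLeft c₂))
    (fun p : (Fin n → ZMod q) × (Fin n → ZMod q) => if p ∈ T then (1:ℝ) else 0)
  simp only [Equiv.prodCongr_apply, Equiv.coe_addLeft, Prod.map] at this
  rw [this, Finset.sum_boole]
  simp [Finset.filter_univ_mem]

private lemma sub_shift_sum (T : Finset ((Fin n → ZMod q) × (Fin n → ZMod q)))
    (c₁ c₂ : Fin n → ZMod q) :
    ∑ p : (Fin n → ZMod q) × (Fin n → ZMod q),
      (if (c₁ - p.1, c₂ - p.2) ∈ T then (1:ℝ) else 0) = T.card := by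
  have := Equiv.sum_comp ((Equiv.subLeft c₁).prodCongr (Equiv.subLeft c₂))
    (fun p : (Fin n → ZMod q) × (Fin n → ZMod q) => if p ∈ T then (1:ℝ) else 0)
  simp only [Equiv.prodCongr_apply, Equiv.subLeft_apply, Prod.map] at this
  rw [this, Finset.sum_boole]
  simp [Finset.filter_univ_mem]

private lemma cov_eq_zero (T : Finset ((Fin n → ZMod q) × (Fin n → ZMod q)))
    (u utld u' utld' : (i : Fin m) → (Fin (k i) → ZMod q))
    (hli : LinearIndependent (ZMod q) ![u - utld, u' - utld']) :
    unifCov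
      (fun ω : ((i : Fin m) → Matrix (Fin (k i)) (Fin n) (ZMod q)) ×
                (Fin n → ZMod q) × (Fin n → ZMod q) =>
        if ((∑ i, u i ᵥ* ω.1 i) + ω.2.1, (∑ i, u' i ᵥ* ω.1 i) + ω.2.2) ∈ T
          then (1 : ℝ) else 0)
      (fun ω =>
        if ((∑ i, utld i ᵥ* ω.1 i) + ω.2.1, (∑ i, utld' i ᵥ* ω.1 i) + ω.2.2) ∈ T
          then (1 : ℝ) else 0) = 0 := by
  let 𝒢 := (i : Fin m) → Matrix (Fin (k i)) (Fin n) (ZMod q)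
  let P := ((Fin n → ZMod q) × (Fin n → ZMod q))
  set ψ := psiHom (n := n) (u - utld) (u' - utld') with hψ
  have hsurj := psiHom_surj (n := n) hli
  set K := Fintype.card {G : 𝒢 // ψ G = 0} with hK
  have hdiff : ∀ (x : (i : Fin m) → Fin (k i) → ZMod q) (y) (G : 𝒢),
      ∑ i, (x - y) i ᵥ* G i = (∑ i, x i ᵥ* G i) - ∑ i, y i ᵥ* G i := by
    intro x y G
    simp only [Pi.sub_apply, Matrix.sub_vecMul, Finset.sum_sub_distrib]
  have hX : ∑ ω : 𝒢 × P,
      (if ((∑ i, u i ᵥ* ω.1 i) + ω.2.1, (∑ i, u' i ᵥ* ω.1 i) + ω.2.2) ∈ T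
        then (1 : ℝ) else 0) = (Fintype.card 𝒢 : ℝ) * T.card := by
    rw [Fintype.sum_prod_type]
    rw [Finset.sum_congr rfl fun G _ => shift_sum T (∑ i, u i ᵥ* G i) (∑ i, u' i ᵥ* G i)]
    rw [Finset.sum_const, nsmul_eq_mul, Finset.card_univ]
  have hY : ∑ ω : 𝒢 × P,
      (if ((∑ i, utld i ᵥ* ω.1 i) + ω.2.1, (∑ i, utld' i ᵥ* ω.1 i) + ω.2.2) ∈ T
        then (1 : ℝ) else 0) = (Fintype.card 𝒢 : ℝ) * T.card := by
    rw [Fintype.sum_prod_type]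
    rw [Finset.sum_congr rfl fun G _ =>
      shift_sum T (∑ i, utld i ᵥ* G i) (∑ i, utld' i ᵥ* G i)]
    rw [Finset.sum_const, nsmul_eq_mul, Finset.card_univ]
  have hXY : ∑ ω : 𝒢 × P,
      ((if ((∑ i, u i ᵥ* ω.1 i) + ω.2.1, (∑ i, u' i ᵥ* ω.1 i) + ω.2.2) ∈ T
        then (1 : ℝ) else 0) *
       (if ((∑ i, utld i ᵥ* ω.1 i) + ω.2.1, (∑ i, utld' i ᵥ* ω.1 i) + ω.2.2) ∈ T
        then (1 : ℝ) else 0)) = (T.card : ℝ) * ((K : ℝ) * T.card) := by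
    rw [Fintype.sum_prod_type]
    have step1 : ∀ G : 𝒢, ∑ p : P,
        ((if ((∑ i, u i ᵥ* G i) + p.1, (∑ i, u' i ᵥ* G i) + p.2) ∈ T then (1:ℝ) else 0) *
         (if ((∑ i, utld i ᵥ* G i) + p.1, (∑ i, utld' i ᵥ* G i) + p.2) ∈ T
          then (1:ℝ) else 0))
        = ∑ p : P, ((if p ∈ T then (1:ℝ) else 0) *
            (if (p.1 - (ψ G).1, p.2 - (ψ G).2) ∈ T then (1:ℝ) else 0)) := by
      intro G
      rw [← Equiv.sum_comp ((Equiv.addLeft (∑ i, u i ᵥ* G i)).prodCongr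
        (Equiv.addLeft (∑ i, u' i ᵥ* G i)))
        (fun p : P => (if p ∈ T then (1:ℝ) else 0) *
            (if (p.1 - (ψ G).1, p.2 - (ψ G).2) ∈ T then (1:ℝ) else 0))]
      refine Finset.sum_congr rfl fun p _ => ?_
      simp only [Equiv.prodCongr_apply, Equiv.coe_addLeft, Prod.map]
      have hψ1 : (ψ G).1 = ∑ i, (u - utld) i ᵥ* G i := rfl
      have hψ2 : (ψ G).2 = ∑ i, (u' - utld') i ᵥ* G i := rfl
      have e1 : (∑ i, u i ᵥ* G i) + p.1 - (ψ G).1 = (∑ i, utld i ᵥ* G i) + p.1 := by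
        rw [hψ1, hdiff]; abel
      have e2 : (∑ i, u' i ᵥ* G i) + p.2 - (ψ G).2 = (∑ i, utld' i ᵥ* G i) + p.2 := by
        rw [hψ2, hdiff]; abel
      rw [e1, e2]
    rw [Finset.sum_congr rfl fun G _ => step1 G, Finset.sum_comm]
    have step2 : ∀ p : P, ∑ G : 𝒢, ((if p ∈ T then (1:ℝ) else 0) *
        (if (p.1 - (ψ G).1, p.2 - (ψ G).2) ∈ T then (1:ℝ) else 0))
        = (if p ∈ T then (1:ℝ) else 0) * ((K : ℝ) * T.card) := by
      intro p
      rw [← Finset.mul_sum]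
      congr 1
      have hs := sum_comp_surj ψ hsurj
        (fun y : P => if (p.1 - y.1, p.2 - y.2) ∈ T then (1:ℝ) else 0)
      rw [hs, sub_shift_sum T p.1 p.2]
      norm_cast
    rw [Finset.sum_congr rfl fun p _ => step2 p, ← Finset.sum_mul]
    congr 1
    rw [Finset.sum_boole]
    simp [Finset.filter_univ_mem]
  have hc𝒢 : (Fintype.card 𝒢 : ℝ) = (Fintype.card P : ℝ) * K := by
    exact_mod_cast congrArg (Nat.cast : ℕ → ℝ) (card_eq_surj ψ hsurj)
  have hcΩ : (Fintype.card (𝒢 × P) : ℝ) = (Fintype.card 𝒢 : ℝ) * Fintype.card P := by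
    rw [Fintype.card_prod]; push_cast; ring
  have hM : (Fintype.card P : ℝ) ≠ 0 := by
    exact_mod_cast Fintype.card_ne_zero
  have hKne : (K : ℝ) ≠ 0 := by
    have : 0 < K := Fintype.card_pos_iff.mpr ⟨⟨0, map_zero ψ⟩⟩
    exact_mod_cast this.ne'
  simp only [unifCov, unifExp]
  rw [hXY, hX, hY, hcΩ, hc𝒢]
  field_simp
  ring

end LA

/-- Let `q` be a prime, `G_1, …, G_m` independent uniformly random
matrices over `F_q` (`G_i` of dimensions `k_i × n`), and `b_1, b_2` independent
uniform dithers on `F_q^n`, independent of the `G_i` (all modelled by a uniform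
sample `ω = ((G_i)_i, b_1, b_2)`).  Define `g(u) = Σ_i u_i G_i + b_1` and
`g'(u') = Σ_i u'_i G_i + b_2`.  Fix finite message sets `S_1, S_2` of tuples and a
target set `T ⊆ F_q^n × F_q^n`, and let
`θ = Σ_{u ∈ S_1, u' ∈ S_2} 1{(g(u), g'(u')) ∈ T}`.  Then the covariance
`Cov(1{(g(u), g'(u')) ∈ T}, 1{(g(ũ), g'(ũ')) ∈ T})` equals `0` whenever the stacked
vectors `u - ũ` and `u' - ũ'` are linearly independent over `F_q`; consequently
`Var(θ)` equals the sum of the covariances over only those pairs `((u,u'), (ũ,ũ'))`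
for which `u - ũ` and `u' - ũ'` are linearly dependent. -/
theorem nqlc_variance_decomposition (q : ℕ) [Fact (Nat.Prime q)] (m n : ℕ)
    (k : Fin m → ℕ)
    (S₁ S₂ : Finset ((i : Fin m) → (Fin (k i) → ZMod q)))
    (T : Finset ((Fin n → ZMod q) × (Fin n → ZMod q))) :
    (∀ u utld u' utld' : (i : Fin m) → (Fin (k i) → ZMod q),
      LinearIndependent (ZMod q) ![u - utld, u' - utld'] →
      unifCov
        (fun ω : ((i : Fin m) → Matrix (Fin (k i)) (Fin n) (ZMod q)) ×
                  (Fin n → ZMod q) × (Fin n → ZMod q) =>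
          if ((∑ i, u i ᵥ* ω.1 i) + ω.2.1, (∑ i, u' i ᵥ* ω.1 i) + ω.2.2) ∈ T
            then (1 : ℝ) else 0)
        (fun ω =>
          if ((∑ i, utld i ᵥ* ω.1 i) + ω.2.1, (∑ i, utld' i ᵥ* ω.1 i) + ω.2.2) ∈ T
            then (1 : ℝ) else 0) = 0) ∧
    unifVar
        (fun ω : ((i : Fin m) → Matrix (Fin (k i)) (Fin n) (ZMod q)) ×
                  (Fin n → ZMod q) × (Fin n → ZMod q) =>
          ∑ u ∈ S₁, ∑ u' ∈ S₂,
            if ((∑ i, u i ᵥ* ω.1 i) + ω.2.1, (∑ i, u' i ᵥ* ω.1 i) + ω.2.2) ∈ T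
              then (1 : ℝ) else 0) =
      ∑ p ∈ (S₁ ×ˢ S₂) ×ˢ (S₁ ×ˢ S₂),
        if LinearIndependent (ZMod q) ![p.1.1 - p.2.1, p.1.2 - p.2.2] then 0
        else
          unifCov
            (fun ω : ((i : Fin m) → Matrix (Fin (k i)) (Fin n) (ZMod q)) ×
                      (Fin n → ZMod q) × (Fin n → ZMod q) =>
              if ((∑ i, p.1.1 i ᵥ* ω.1 i) + ω.2.1,
                  (∑ i, p.1.2 i ᵥ* ω.1 i) + ω.2.2) ∈ T then (1 : ℝ) else 0)
            (fun ω =>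
              if ((∑ i, p.2.1 i ᵥ* ω.1 i) + ω.2.1,
                  (∑ i, p.2.2 i ᵥ* ω.1 i) + ω.2.2) ∈ T then (1 : ℝ) else 0) := by
  constructor
  · intro u utld u' utld' hli
    exact cov_eq_zero T u utld u' utld' hli
  · set g : ((i : Fin m) → (Fin (k i) → ZMod q)) × ((i : Fin m) → (Fin (k i) → ZMod q)) →
        (((i : Fin m) → Matrix (Fin (k i)) (Fin n) (ZMod q)) ×
          (Fin n → ZMod q) × (Fin n → ZMod q)) → ℝ :=
      fun p ω =>
        if ((∑ i, p.1 i ᵥ* ω.1 i) + ω.2.1, (∑ i, p.2 i ᵥ* ω.1 i) + ω.2.2) ∈ T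
          then (1 : ℝ) else 0 with hg
    have hθ : (fun ω : ((i : Fin m) → Matrix (Fin (k i)) (Fin n) (ZMod q)) ×
                  (Fin n → ZMod q) × (Fin n → ZMod q) =>
          ∑ u ∈ S₁, ∑ u' ∈ S₂,
            if ((∑ i, u i ᵥ* ω.1 i) + ω.2.1, (∑ i, u' i ᵥ* ω.1 i) + ω.2.2) ∈ T
              then (1 : ℝ) else 0) = fun ω => ∑ p ∈ S₁ ×ˢ S₂, g p ω := by
      funext ω
      rw [Finset.sum_product]
    rw [unifVar, hθ, unifCov_sum_sum]
    rw [Finset.sum_product (S₁ ×ˢ S₂) (S₁ ×ˢ S₂)]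
    refine Finset.sum_congr rfl fun x hx => Finset.sum_congr rfl fun y hy => ?_
    by_cases h : LinearIndependent (ZMod q) ![x.1 - y.1, x.2 - y.2]
    · rw [if_pos h]
      exact cov_eq_zero T x.1 y.1 x.2 y.2 h
    · rw [if_neg h]
end
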